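/- For s > 0 let p_s : ℕ → ℝ be the Poisson probability mass function p_s(x) = e^{−s}·s^x/x!, and let H(s) = −Σ_{x=0}^∞ p_s(x)·log p_s(x). There exists a constant C > 0 such that for every s ∈ (0, 1/2] and every r ∈ {2, 3, 4}, | Σ_{x=0}^∞ p_s(x)·| −log p_s(x) − H(s) |^r − s·(log(1/s))^r | ≤ C·s²·(log(1/s))^r. -/

import Mathlib

/-!
Write `L = log (1 / s)` and `M = ∑ₓ pₛ(x) log x!`. Since `log pₛ(x) = -s - x L - log x!`,
the centred information is `(x - s) L + (log x! - M)`, and `0 ≤ M ≤ s²` because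
`log x! ≤ x (x - 1)` while the second factorial moment of a Poisson variable is `s²`.
The atom `x = 1` has mass `s e^{-s} = s + O(s²)` and deviation `L + O(s L)`, which produces
the main term `s L^r`. The atom `x = 0` has deviation `O(s L)`, and the atoms `x ≥ 2` have
mass `O(s² 2^{-x})` and deviation `O(x² L)`; for `r ≥ 2` both contribute `O(s² L^r)`.
-/

open Real

open scoped Nat

noncomputable def poissonWeight (s : ℝ) (x : ℕ) : ℝ := exp (-s) * s ^ x / x !

noncomputable def poissonEntropy (s : ℝ) : ℝ :=
  -∑' x, poissonWeight s x * log (poissonWeight s x)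

noncomputable def poissonLogFactorialMean (s : ℝ) : ℝ :=
  ∑' x, poissonWeight s x * log (x ! : ℝ)

theorem descFactorial_mul_poissonWeight_add (s : ℝ) (y k : ℕ) :
    ((y + k).descFactorial k : ℝ) * poissonWeight s (y + k) = s ^ k * poissonWeight s y := by
  have hfac := Nat.factorial_mul_descFactorial (Nat.le_add_left k y)
  rw [Nat.add_sub_cancel] at hfac
  have hfac' : ((y + k) ! : ℝ) = y ! * (y + k).descFactorial k := by exact_mod_cast hfac.symm
  unfold poissonWeight
  rw [hfac']
  have : (0 : ℝ) < (y + k).descFactorial k := by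
    exact_mod_cast Nat.descFactorial_pos.2 (Nat.le_add_left k y)
  field_simp
  ring

theorem hasSum_descFactorial_mul_poissonWeight (s : ℝ) (k : ℕ) :
    HasSum (fun x => (x.descFactorial k : ℝ) * poissonWeight s x) (s ^ k) := by
  have hshift : HasSum (fun y => ((y + k).descFactorial k : ℝ) * poissonWeight s (y + k))
      (s ^ k) := by
    have h := (NormedSpace.expSeries_div_hasSum_exp s).mul_left (s ^ k * exp (-s))
    rw [← exp_eq_exp_ℝ, mul_assoc, ← exp_add, neg_add_cancel, exp_zero, mul_one] at h
    simp_rw [descFactorial_mul_poissonWeight_add]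
    simpa only [poissonWeight, mul_div_assoc, ← mul_assoc] using h
  refine (hasSum_nat_add_iff' k).mp ?_
  rw [Finset.sum_eq_zero fun x hx => ?_, sub_zero]
  · exact hshift
  · rw [Nat.descFactorial_eq_zero_iff_lt.2 (Finset.mem_range.1 hx), Nat.cast_zero, zero_mul]

theorem hasSum_poissonWeight (s : ℝ) : HasSum (poissonWeight s) 1 := by
  simpa using hasSum_descFactorial_mul_poissonWeight s 0

theorem hasSum_natCast_mul_poissonWeight (s : ℝ) :
    HasSum (fun x : ℕ => (x : ℝ) * poissonWeight s x) s := by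
  simpa using hasSum_descFactorial_mul_poissonWeight s 1

section PoissonWeight

variable {s : ℝ}

theorem poissonWeight_nonneg (hs : 0 ≤ s) (x : ℕ) : 0 ≤ poissonWeight s x := by
  unfold poissonWeight; positivity

theorem poissonWeight_le_pow (hs : 0 ≤ s) (x : ℕ) : poissonWeight s x ≤ s ^ x := by
  unfold poissonWeight
  rw [div_le_iff₀ (by positivity)]
  have h1 : exp (-s) ≤ 1 := exp_le_one_iff.2 (by linarith)
  have h2 : (1 : ℝ) ≤ x ! := by exact_mod_cast x.factorial_pos
  nlinarith [pow_nonneg hs x]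

theorem log_poissonWeight (hs : 0 < s) (x : ℕ) :
    log (poissonWeight s x) = -s + x * log s - log (x ! : ℝ) := by
  unfold poissonWeight
  rw [log_div (by positivity) (by positivity), log_mul (exp_ne_zero _) (by positivity), log_exp,
    log_pow]

end PoissonWeight

theorem log_factorial_le_descFactorial_two (n : ℕ) : log (n ! : ℝ) ≤ n.descFactorial 2 := by
  rcases n.eq_zero_or_pos with rfl | hn
  · simp
  have hn' : (0 : ℝ) < n := by exact_mod_cast hn
  calc log (n ! : ℝ) ≤ log ((n : ℝ) ^ n) :=
        log_le_log (by positivity) (by exact_mod_cast n.factorial_le_pow)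
    _ = n * log n := log_pow n n
    _ ≤ n * (n - 1) := mul_le_mul_of_nonneg_left (log_le_sub_one_of_pos hn') hn'.le
    _ = n.descFactorial 2 := (Nat.cast_descFactorial_two ..).symm

section LogFactorialMean

variable {s : ℝ}

theorem poissonWeight_mul_log_factorial_nonneg (hs : 0 ≤ s) (x : ℕ) :
    0 ≤ poissonWeight s x * log (x ! : ℝ) :=
  mul_nonneg (poissonWeight_nonneg hs x) (log_nonneg (by exact_mod_cast x.factorial_pos))

theorem poissonWeight_mul_log_factorial_le (hs : 0 ≤ s) (x : ℕ) :
    poissonWeight s x * log (x ! : ℝ) ≤ (x.descFactorial 2 : ℝ) * poissonWeight s x := by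
  rw [mul_comm]
  exact mul_le_mul_of_nonneg_right (log_factorial_le_descFactorial_two x)
    (poissonWeight_nonneg hs x)

theorem summable_poissonWeight_mul_log_factorial (hs : 0 ≤ s) :
    Summable fun x => poissonWeight s x * log (x ! : ℝ) :=
  .of_nonneg_of_le (poissonWeight_mul_log_factorial_nonneg hs)
    (poissonWeight_mul_log_factorial_le hs) (hasSum_descFactorial_mul_poissonWeight s 2).summable

theorem poissonLogFactorialMean_nonneg (hs : 0 ≤ s) : 0 ≤ poissonLogFactorialMean s :=
  tsum_nonneg (poissonWeight_mul_log_factorial_nonneg hs)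

theorem poissonLogFactorialMean_le_sq (hs : 0 ≤ s) : poissonLogFactorialMean s ≤ s ^ 2 :=
  hasSum_le (poissonWeight_mul_log_factorial_le hs)
    (summable_poissonWeight_mul_log_factorial hs).hasSum
    (hasSum_descFactorial_mul_poissonWeight s 2)

end LogFactorialMean

section Entropy

variable {s : ℝ}

theorem poissonEntropy_eq (hs : 0 < s) :
    poissonEntropy s = s - s * log s + poissonLogFactorialMean s := by
  have h := (((hasSum_poissonWeight s).mul_left (-s)).add
    ((hasSum_natCast_mul_poissonWeight s).mul_left (log s))).sub
    (summable_poissonWeight_mul_log_factorial hs.le).hasSum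
  have hfun : (fun x => -s * poissonWeight s x + log s * (x * poissonWeight s x) -
      poissonWeight s x * log (x ! : ℝ)) =
      fun x => poissonWeight s x * log (poissonWeight s x) := by
    funext x
    rw [log_poissonWeight hs]
    ring
  rw [hfun] at h
  rw [poissonEntropy, h.tsum_eq, poissonLogFactorialMean]
  ring

theorem neg_log_poissonWeight_sub_poissonEntropy (hs : 0 < s) (x : ℕ) :
    -log (poissonWeight s x) - poissonEntropy s =
      (x - s) * log (1 / s) + (log (x ! : ℝ) - poissonLogFactorialMean s) := by
  rw [log_poissonWeight hs, poissonEntropy_eq hs, one_div, log_inv]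
  ring

end Entropy

section Moments

variable {s L : ℝ} {r : ℕ}

theorem poissonWeight_zero_mul_pow_le (hs0 : 0 ≤ s) (hs1 : s ≤ 1) (hL : 0 ≤ L) (hr : 2 ≤ r)
    {a : ℝ} (ha : |a| ≤ 2 * s * L) : poissonWeight s 0 * |a| ^ r ≤ 2 ^ r * s ^ 2 * L ^ r :=
  calc poissonWeight s 0 * |a| ^ r ≤ 1 * (2 * s * L) ^ r := by
        gcongr
        simpa using poissonWeight_le_pow hs0 0
    _ = 2 ^ r * s ^ r * L ^ r := by ring
    _ ≤ 2 ^ r * s ^ 2 * L ^ r := by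
        gcongr 2 ^ r * ?_ * L ^ r
        exact pow_le_pow_of_le_one hs0 hs1 hr

theorem poissonWeight_one_mul_pow_le (hs0 : 0 ≤ s) {a : ℝ} (ha0 : 0 ≤ a) (ha : a ≤ L) :
    poissonWeight s 1 * |a| ^ r ≤ s * L ^ r := by
  rw [abs_of_nonneg ha0]
  gcongr
  simpa using poissonWeight_le_pow hs0 1

theorem le_poissonWeight_one_mul_pow (hs0 : 0 ≤ s) (hs : s ≤ 1 / 2) (hL : 0 ≤ L) {a : ℝ}
    (ha : (1 - 2 * s) * L ≤ a) :
    s * L ^ r - (2 * r + 1) * s ^ 2 * L ^ r ≤ poissonWeight s 1 * |a| ^ r := by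
  have hweight : (1 - s) * s ≤ poissonWeight s 1 := by
    have := add_one_le_exp (-s)
    simp only [poissonWeight, pow_one, Nat.factorial_one, Nat.cast_one, div_one]
    nlinarith
  have hbernoulli : 1 - 2 * r * s ≤ (1 - 2 * s) ^ r :=
    calc 1 - 2 * r * s = 1 + r * (-(2 * s)) := by ring
      _ ≤ (1 + -(2 * s)) ^ r := one_add_mul_le_pow (by linarith) r
      _ = (1 - 2 * s) ^ r := by ring
  have hpow : (1 - 2 * r * s) * L ^ r ≤ |a| ^ r :=
    calc (1 - 2 * r * s) * L ^ r ≤ (1 - 2 * s) ^ r * L ^ r := by gcongr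
      _ = ((1 - 2 * s) * L) ^ r := (mul_pow ..).symm
      _ ≤ |a| ^ r := pow_le_pow_left₀ (by nlinarith) (ha.trans (le_abs_self a)) r
  have hexpand : (1 - s) * s * ((1 - 2 * r * s) * L ^ r) =
      s * L ^ r - (2 * r + 1) * s ^ 2 * L ^ r + 2 * r * s ^ 3 * L ^ r := by ring
  calc s * L ^ r - (2 * r + 1) * s ^ 2 * L ^ r ≤ (1 - s) * s * ((1 - 2 * r * s) * L ^ r) := by
        rw [hexpand]; linarith [show 0 ≤ 2 * r * s ^ 3 * L ^ r by positivity]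
    _ ≤ (1 - s) * s * |a| ^ r := mul_le_mul_of_nonneg_left hpow (by nlinarith)
    _ ≤ poissonWeight s 1 * |a| ^ r := by gcongr

theorem poissonWeight_le_of_two_le (hs0 : 0 ≤ s) (hs : s ≤ 1 / 2) {x : ℕ} (hx : 2 ≤ x) :
    poissonWeight s x ≤ 4 * s ^ 2 * (1 / 2) ^ x := by
  obtain ⟨y, rfl⟩ := Nat.exists_eq_add_of_le' hx
  calc poissonWeight s (y + 2) ≤ s ^ y * s ^ 2 :=
        (poissonWeight_le_pow hs0 _).trans_eq (pow_add ..)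
    _ ≤ (1 / 2) ^ y * s ^ 2 := by gcongr
    _ = 4 * s ^ 2 * (1 / 2) ^ (y + 2) := by ring

theorem poissonWeight_mul_pow_le (hs0 : 0 ≤ s) (hs : s ≤ 1 / 2) {a : ℝ} {x : ℕ} (hx : 2 ≤ x)
    (ha : |a| ≤ 4 * x ^ 2 * L) :
    poissonWeight s x * |a| ^ r ≤
      4 ^ (r + 1) * s ^ 2 * L ^ r * ((x : ℝ) ^ (2 * r) * (1 / 2) ^ x) := by
  calc poissonWeight s x * |a| ^ r ≤ (4 * s ^ 2 * (1 / 2) ^ x) * (4 * x ^ 2 * L) ^ r := by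
        gcongr
        · exact poissonWeight_le_of_two_le hs0 hs hx
    _ = 4 ^ (r + 1) * s ^ 2 * L ^ r * ((x : ℝ) ^ (2 * r) * (1 / 2) ^ x) := by ring

end Moments

noncomputable def geomHalfMoment (k : ℕ) : ℝ := ∑' n : ℕ, (n : ℝ) ^ k * (1 / 2) ^ n

noncomputable def poissonMomentConst (r : ℕ) : ℝ :=
  2 ^ r + (2 * r + 1) + 4 ^ (r + 1) * geomHalfMoment (2 * r)

theorem summable_geomHalfMoment (k : ℕ) : Summable fun n : ℕ => (n : ℝ) ^ k * (1 / 2) ^ n :=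
  summable_pow_mul_geometric_of_norm_lt_one k (by norm_num)

theorem geomHalfMoment_nonneg (k : ℕ) : 0 ≤ geomHalfMoment k :=
  tsum_nonneg fun n => by positivity

theorem poissonMomentConst_pos (r : ℕ) : 0 < poissonMomentConst r := by
  unfold poissonMomentConst
  have := geomHalfMoment_nonneg (2 * r)
  positivity

theorem tsum_geomHalfMoment_nat_add_two_le (k : ℕ) :
    ∑' y : ℕ, ((y + 2 : ℕ) : ℝ) ^ k * (1 / 2) ^ (y + 2) ≤ geomHalfMoment k := by
  rw [geomHalfMoment, ← (summable_geomHalfMoment k).sum_add_tsum_nat_add 2]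
  have : 0 ≤ ∑ n ∈ Finset.range 2, (n : ℝ) ^ k * (1 / 2) ^ n :=
    Finset.sum_nonneg fun n _ => by positivity
  linarith

theorem abs_tsum_poissonWeight_mul_pow_sub_le {s L : ℝ} {r : ℕ} {d : ℕ → ℝ} (hs0 : 0 ≤ s)
    (hs : s ≤ 1 / 2) (hL : 0 ≤ L) (hr : 2 ≤ r) (hd0 : |d 0| ≤ 2 * s * L)
    (hd1 : (1 - 2 * s) * L ≤ d 1) (hd1' : d 1 ≤ L)
    (hd : ∀ x, 2 ≤ x → |d x| ≤ 4 * x ^ 2 * L) :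
    |∑' x, poissonWeight s x * |d x| ^ r - s * L ^ r| ≤
      poissonMomentConst r * s ^ 2 * L ^ r := by
  set f : ℕ → ℝ := fun x => poissonWeight s x * |d x| ^ r
  have hf : ∀ x, 0 ≤ f x := fun x => mul_nonneg (poissonWeight_nonneg hs0 x) (by positivity)
  set B := 4 ^ (r + 1) * s ^ 2 * L ^ r
  have htail_le :
      ∀ y : ℕ, f (y + 2) ≤ B * (((y + 2 : ℕ) : ℝ) ^ (2 * r) * (1 / 2) ^ (y + 2)) :=
    fun y => poissonWeight_mul_pow_le hs0 hs (by omega) (hd _ (by omega))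
  have hgtail := (summable_nat_add_iff 2).2 (summable_geomHalfMoment (2 * r))
  have hftail : Summable fun y => f (y + 2) := .of_nonneg_of_le (fun y => hf _) htail_le
    (hgtail.mul_left B)
  have hsplit : ∑' x, f x = f 0 + f 1 + ∑' y, f (y + 2) := by
    rw [← ((summable_nat_add_iff 2).1 hftail).sum_add_tsum_nat_add 2]
    simp [Finset.sum_range_succ]
  have htail : ∑' y, f (y + 2) ≤ B * geomHalfMoment (2 * r) :=
    calc ∑' y, f (y + 2)
        ≤ ∑' y : ℕ, B * (((y + 2 : ℕ) : ℝ) ^ (2 * r) * (1 / 2) ^ (y + 2)) :=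
          hftail.tsum_le_tsum htail_le (hgtail.mul_left B)
      _ ≤ B * geomHalfMoment (2 * r) := by
          rw [tsum_mul_left]
          exact mul_le_mul_of_nonneg_left (tsum_geomHalfMoment_nat_add_two_le _) (by positivity)
  have htail0 : 0 ≤ ∑' y, f (y + 2) := tsum_nonneg fun y => hf (y + 2)
  have h0 : f 0 ≤ 2 ^ r * s ^ 2 * L ^ r :=
    poissonWeight_zero_mul_pow_le hs0 (by linarith) hL hr hd0
  have h1 : f 1 ≤ s * L ^ r :=
    poissonWeight_one_mul_pow_le hs0 ((by nlinarith : 0 ≤ (1 - 2 * s) * L).trans hd1) hd1'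
  have h1' : s * L ^ r - (2 * r + 1) * s ^ 2 * L ^ r ≤ f 1 :=
    le_poissonWeight_one_mul_pow hs0 hs hL hd1
  rw [hsplit, poissonMomentConst, abs_le]
  constructor <;> linarith [hf 0]

theorem abs_sub_mul_add_log_factorial_sub_le {s L M : ℝ} (hs0 : 0 ≤ s) (hs : s ≤ 1 / 2)
    (hL : 1 / 2 ≤ L) (hM0 : 0 ≤ M) (hM : M ≤ s ^ 2) {x : ℕ} (hx : 1 ≤ x) :
    |(x - s) * L + (log (x ! : ℝ) - M)| ≤ 4 * x ^ 2 * L := by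
  have hx' : (1 : ℝ) ≤ x := by exact_mod_cast hx
  have hlog0 : 0 ≤ log (x ! : ℝ) := log_nonneg (by exact_mod_cast x.factorial_pos)
  have hlog : log (x ! : ℝ) ≤ x ^ 2 := by
    have := log_factorial_le_descFactorial_two x
    rw [Nat.cast_descFactorial_two] at this
    nlinarith
  rw [abs_le]
  constructor <;> nlinarith [mul_le_mul_of_nonneg_right hx' (by linarith : 0 ≤ L)]

theorem one_half_lt_log_one_div {s : ℝ} (hs : 0 < s) (hs2 : s ≤ 1 / 2) :
    1 / 2 < log (1 / s) := by
  have h2 : log 2 ≤ log (1 / s) := log_le_log (by norm_num) (by rw [le_div_iff₀ hs]; linarith)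
  linarith [log_two_gt_d9]

theorem abs_tsum_poissonWeight_mul_abs_information_pow_sub_le {s : ℝ} {r : ℕ} (hs : 0 < s)
    (hs2 : s ≤ 1 / 2) (hr : 2 ≤ r) :
    |∑' x, poissonWeight s x * |-log (poissonWeight s x) - poissonEntropy s| ^ r -
        s * log (1 / s) ^ r| ≤ poissonMomentConst r * s ^ 2 * log (1 / s) ^ r := by
  have hL := one_half_lt_log_one_div hs hs2
  have hM0 := poissonLogFactorialMean_nonneg hs.le
  have hM := poissonLogFactorialMean_le_sq hs.le
  have hsL : s * s ≤ s * log (1 / s) := by nlinarith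
  apply abs_tsum_poissonWeight_mul_pow_sub_le hs.le hs2 (by linarith) hr
  all_goals simp only [neg_log_poissonWeight_sub_poissonEntropy hs]
  · simp only [Nat.cast_zero, Nat.factorial_zero, Nat.cast_one, log_one]
    rw [abs_le]
    constructor <;> nlinarith
  · simp only [Nat.cast_one, Nat.factorial_one, log_one]
    nlinarith
  · simp only [Nat.cast_one, Nat.factorial_one, log_one]
    nlinarith
  · intro x hx
    exact abs_sub_mul_add_log_factorial_sub_le hs.le hs2 hL.le hM0 hM (by omega)

/-- Small-time asymptotics of the absolute central moments of the Poisson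
information: with `p_s` the Poisson(s) pmf and `H(s)` its entropy, there is a
constant `C > 0` such that for every `s ∈ (0, 1/2]` and every `r ∈ {2, 3, 4}`,
`|∑_x p_s(x)·|-log p_s(x) - H(s)|^r - s·(log(1/s))^r| ≤ C·s²·(log(1/s))^r`. -/
theorem poisson_information_central_moments_small_time : ∃ C : ℝ, 0 < C ∧
    ∀ s : ℝ, 0 < s → s ≤ 1/2 → ∀ r : ℕ, (r = 2 ∨ r = 3 ∨ r = 4) →
      let p : ℕ → ℝ := fun x => Real.exp (-s) * s ^ x / (Nat.factorial x : ℝ)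
      let H : ℝ := -∑' x : ℕ, p x * Real.log (p x)
      |(∑' x : ℕ, p x * |(-Real.log (p x) - H)| ^ r) - s * (Real.log (1/s)) ^ r| ≤
        C * s ^ 2 * (Real.log (1/s)) ^ r := by
  have hpos := poissonMomentConst_pos
  refine ⟨poissonMomentConst 2 + poissonMomentConst 3 + poissonMomentConst 4,
    by linarith [hpos 2, hpos 3, hpos 4], fun s hs hs2 r hr => ?_⟩
  have hconst : poissonMomentConst r ≤
      poissonMomentConst 2 + poissonMomentConst 3 + poissonMomentConst 4 := by
    rcases hr with rfl | rfl | rfl <;> linarith [hpos 2, hpos 3, hpos 4]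
  have hr2 : 2 ≤ r := by omega
  have hL := one_half_lt_log_one_div hs hs2
  refine (abs_tsum_poissonWeight_mul_abs_information_pow_sub_le hs hs2 hr2).trans ?_
  gcongr
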